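/- arXiv:2409.19767 — 2 statements merged into one kernel-verified Lean document; each statement's English description precedes it below -/
import Mathlib

section
/- Let U: ℤ⁴ → ℤ⁴ be the linear map given by the matrix with rows (−1, 0, −2, 1), (0, −1, −3, 0), (1, 0, 2, 0), (0, 1, 2, 0). Then the image under U of the semigroup S = ω ∩ ℤ⁴ equals the additive subsemigroup S_A of ℤ⁴ generated by the set 𝒢 = {h₁, h₂, h₃, h₄, h₅, h₆, h₇, h₄−h₁, h₆−h₁, h₇−h₁, h₄−h₂, h₇−h₂, h₄−h₃, h₆−h₃, h₇−h₃, h₄−h₅, h₆−h₅}; that is, U(S) = S_A. -/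
/-- The seven lattice points `h₁, …, h₇` (0-indexed as `h 0, …, h 6`). -/
def h : Fin 7 → (Fin 4 → ℤ) :=
  ![![1,0,0,0], ![0,1,0,0], ![0,0,1,0], ![0,0,0,1],
    ![2,3,-2,-1], ![1,3,-1,-1], ![1,2,-1,0]]

/-- Coercion of an integer vector to a real vector. -/
def toR (v : Fin 4 → ℤ) : Fin 4 → ℝ := fun j => (v j : ℝ)

/-- The convex cone generated by a finite family of vectors in `ℝ⁴`. -/
def cone {n : ℕ} (v : Fin n → (Fin 4 → ℝ)) : Set (Fin 4 → ℝ) :=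
  {x | ∃ lam : Fin n → ℝ, (∀ i, 0 ≤ lam i) ∧ x = ∑ i, lam i • v i}

/-- The cone `ω` generated by `h₁, …, h₆`. -/
def ω : Set (Fin 4 → ℝ) := cone (fun i : Fin 6 => toR (h i.castSucc))

/-- The semigroup `S = ω ∩ ℤ⁴`. -/
def S : Set (Fin 4 → ℤ) := {v | toR v ∈ ω}

/-- The matrix `U` (acting on column vectors). -/
def U : Matrix (Fin 4) (Fin 4) ℤ :=
  !![-1, 0, -2, 1;
      0, -1, -3, 0;
      1, 0, 2, 0;
      0, 1, 2, 0]

/-- The generating set `𝒢`. -/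
def G : Set (Fin 4 → ℤ) :=
  {h 0, h 1, h 2, h 3, h 4, h 5, h 6,
   h 3 - h 0, h 5 - h 0, h 6 - h 0,
   h 3 - h 1, h 6 - h 1,
   h 3 - h 2, h 5 - h 2, h 6 - h 2,
   h 3 - h 4, h 5 - h 4}

/-!
`S` is cut out of `ℤ⁴` by the six facet inequalities `0 ≤ facetMatrix *ᵥ v` of `ω`, and its
Hilbert basis is `h₁, …, h₇`: every nonzero lattice point of that cone dominates, row by row,
the facet values of some `hᵢ`, and subtracting this `hᵢ` stays in the cone while lowering the sum
of the facet values. The matrix `U` is unimodular, sends every `hᵢ` into `𝒢`, and its inverse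
sends `𝒢` into `S`.
-/

open Matrix

section Cone

variable {n : ℕ} {v : Fin n → Fin 4 → ℝ}

theorem zero_mem_cone : (0 : Fin 4 → ℝ) ∈ cone v :=
  ⟨0, fun _ => le_rfl, by simp⟩

theorem add_mem_cone {x y : Fin 4 → ℝ} (hx : x ∈ cone v) (hy : y ∈ cone v) : x + y ∈ cone v := by
  obtain ⟨μ, hμ, rfl⟩ := hx
  obtain ⟨ν, hν, rfl⟩ := hy
  exact ⟨μ + ν, fun i => add_nonneg (hμ i) (hν i), by simp [add_smul, Finset.sum_add_distrib]⟩

theorem smul_mem_cone {c : ℝ} (hc : 0 ≤ c) {x : Fin 4 → ℝ} (hx : x ∈ cone v) : c • x ∈ cone v := by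
  obtain ⟨μ, hμ, rfl⟩ := hx
  exact ⟨c • μ, fun i => mul_nonneg hc (hμ i), by simp [Finset.smul_sum, smul_smul]⟩

theorem mem_cone_self (i : Fin n) : v i ∈ cone v :=
  ⟨Pi.single i 1, fun j => by by_cases hj : j = i <;> simp [hj], by simp [Pi.single_apply]⟩

end Cone

theorem toR_add (x y : Fin 4 → ℤ) : toR (x + y) = toR x + toR y := by
  ext j; simp [toR]

theorem mulVec_nonneg_of_mem_cone {m : Type*} {n : ℕ} (A : Matrix m (Fin 4) ℤ)
    {w : Fin n → Fin 4 → ℤ} (hw : ∀ i, 0 ≤ A *ᵥ w i) {x : Fin 4 → ℤ}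
    (hx : toR x ∈ cone (fun i => toR (w i))) : 0 ≤ A *ᵥ x := by
  obtain ⟨μ, hμ, hxμ⟩ := hx
  intro j
  have hcast : ((A *ᵥ x) j : ℝ) = ∑ i, μ i * ((A *ᵥ w i) j : ℝ) := by
    have hmap : ∀ y : Fin 4 → ℤ, ((A *ᵥ y) j : ℝ) = (A.map (Int.castRingHom ℝ) *ᵥ toR y) j :=
      fun y => RingHom.map_mulVec (Int.castRingHom ℝ) A y j
    simp only [hmap, hxμ, mulVec_sum, mulVec_smul, Finset.sum_apply, Pi.smul_apply, smul_eq_mul]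
  have hreal : (0 : ℝ) ≤ ((A *ᵥ x) j : ℝ) := by
    rw [hcast]
    exact Finset.sum_nonneg fun i _ => mul_nonneg (hμ i) (by exact_mod_cast hw i j)
  exact_mod_cast hreal

theorem mem_closure_of_exists_mulVec_le {m n ι : Type*} [Fintype m] [Fintype n]
    {A : Matrix m n ℤ} {g : ι → n → ℤ} (hg : ∀ i, 0 < A *ᵥ g i)
    (hex : ∀ v, 0 ≤ A *ᵥ v → v ≠ 0 → ∃ i, A *ᵥ g i ≤ A *ᵥ v) {v : n → ℤ} (hv : 0 ≤ A *ᵥ v) :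
    v ∈ AddSubmonoid.closure (Set.range g) := by
  induction hk : (∑ j, (A *ᵥ v) j).toNat using Nat.strong_induction_on generalizing v with
  | _ k ih =>
    by_cases hv0 : v = 0
    · exact hv0 ▸ zero_mem _
    obtain ⟨i, hi⟩ := hex v hv hv0
    have hsub : 0 ≤ A *ᵥ (v - g i) := by rw [mulVec_sub]; exact sub_nonneg.2 hi
    have hlt : ∑ j, (A *ᵥ (v - g i)) j < ∑ j, (A *ᵥ v) j := by
      apply Fintype.sum_strictMono
      rw [mulVec_sub]
      exact sub_lt_self _ (hg i)
    have hpos : 0 ≤ ∑ j, (A *ᵥ (v - g i)) j := Finset.sum_nonneg fun j _ => hsub j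
    have hmem := ih _ (by omega) hsub rfl
    simpa using add_mem hmem (AddSubmonoid.subset_closure (Set.mem_range_self i))

/-- Its rows are inner normals of the six facets of `ω`. -/
def facetMatrix : Matrix (Fin 6) (Fin 4) ℤ :=
  !![1, 0, 1, 0;
     0, 1, 0, 3;
     0, 2, 3, 0;
     1, 0, 0, 0;
     0, 1, 0, 0;
     1, 0, 0, 1]

theorem facetMatrix_mulVec_le_iff (w v : Fin 4 → ℤ) :
    facetMatrix *ᵥ w ≤ facetMatrix *ᵥ v ↔
      w 0 + w 2 ≤ v 0 + v 2 ∧ w 1 + 3 * w 3 ≤ v 1 + 3 * v 3 ∧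
        2 * w 1 + 3 * w 2 ≤ 2 * v 1 + 3 * v 2 ∧ w 0 ≤ v 0 ∧ w 1 ≤ v 1 ∧ w 0 + w 3 ≤ v 0 + v 3 := by
  simp [facetMatrix, Pi.le_def, Fin.forall_fin_succ, dotProduct, Fin.sum_univ_four, mul_comm]

theorem facetMatrix_mulVec_nonneg_iff (v : Fin 4 → ℤ) :
    0 ≤ facetMatrix *ᵥ v ↔
      0 ≤ v 0 + v 2 ∧ 0 ≤ v 1 + 3 * v 3 ∧ 0 ≤ 2 * v 1 + 3 * v 2 ∧ 0 ≤ v 0 ∧ 0 ≤ v 1 ∧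
        0 ≤ v 0 + v 3 := by
  simpa using facetMatrix_mulVec_le_iff 0 v

theorem facetMatrix_mulVec_nonneg {v : Fin 4 → ℤ} (hv : v ∈ S) : 0 ≤ facetMatrix *ᵥ v :=
  mulVec_nonneg_of_mem_cone facetMatrix (by simp only [Pi.le_def]; decide) hv

theorem facetMatrix_mulVec_h_pos (i : Fin 7) : 0 < facetMatrix *ᵥ h i := by
  revert i
  simp only [Pi.lt_def, Pi.le_def]
  decide

theorem exists_facetMatrix_mulVec_h_le {v : Fin 4 → ℤ} (hv : 0 ≤ facetMatrix *ᵥ v)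
    (hv0 : v ≠ 0) : ∃ i, facetMatrix *ᵥ h i ≤ facetMatrix *ᵥ v := by
  obtain ⟨hr₁, hr₂, hr₃, hr₄, hr₅, hr₆⟩ := (facetMatrix_mulVec_nonneg_iff v).1 hv
  have hv_ne : ¬(v 0 = 0 ∧ v 1 = 0 ∧ v 2 = 0 ∧ v 3 = 0) := by
    rintro ⟨h0, h1, h2, h3⟩
    exact hv0 (funext fun j => by fin_cases j <;> assumption)
  simp only [facetMatrix_mulVec_le_iff]
  rcases le_or_gt 1 (v 0 + v 2) with h02 | h02
  · by_cases h12 : 3 ≤ 2 * v 1 + 3 * v 2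
    · exact ⟨2, by simp only [h, cons_val]; omega⟩
    · exact ⟨0, by simp only [h, cons_val]; omega⟩
  by_cases h13 : 1 ≤ v 0 + v 3 ∧ 3 ≤ v 1 + 3 * v 3
  · exact ⟨3, by simp only [h, cons_val]; omega⟩
  by_cases h0 : v 0 = 0
  · exact ⟨1, by simp only [h, cons_val]; omega⟩
  by_cases h12 : 3 ≤ 2 * v 1 + 3 * v 2
  · exact ⟨5, by simp only [h, cons_val]; omega⟩
  by_cases h0₂ : 2 ≤ v 0
  · exact ⟨4, by simp only [h, cons_val]; omega⟩
  · exact ⟨6, by simp only [h, cons_val]; omega⟩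

theorem zero_mem_S : (0 : Fin 4 → ℤ) ∈ S := by
  show toR 0 ∈ ω
  rw [show toR 0 = 0 from funext fun _ => Int.cast_zero]
  exact zero_mem_cone

theorem add_mem_S {x y : Fin 4 → ℤ} (hx : x ∈ S) (hy : y ∈ S) : x + y ∈ S := by
  show toR (x + y) ∈ ω
  rw [toR_add]
  exact add_mem_cone hx hy

theorem h_mem_S : ∀ i, h i ∈ S := by
  have hgen : ∀ j : Fin 6, h j.castSucc ∈ S := fun j =>
    mem_cone_self (v := fun i : Fin 6 => toR (h i.castSucc)) j
  -- `h₇ = (h₂ + h₄ + h₅) / 2` is the one generator of `S` that is not a generator of `ω`.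
  have h6 : toR (h 6) = (1 / 2 : ℝ) • (toR (h 1) + toR (h 3) + toR (h 4)) := by
    ext j
    have hj : 2 * h 6 j = h 1 j + h 3 j + h 4 j := by revert j; decide
    have hj' : (2 * h 6 j : ℝ) = h 1 j + h 3 j + h 4 j := by exact_mod_cast hj
    simp only [toR, Pi.smul_apply, Pi.add_apply, smul_eq_mul]
    linarith
  refine Fin.lastCases ?_ hgen
  show toR (h 6) ∈ ω
  rw [h6]
  exact smul_mem_cone (by norm_num) (add_mem_cone (add_mem_cone (hgen 1) (hgen 3)) (hgen 4))

theorem closure_range_h_subset_S :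
    (AddSubmonoid.closure (Set.range h) : Set (Fin 4 → ℤ)) ⊆ S := by
  intro v hv
  induction hv using AddSubmonoid.closure_induction with
  | mem _ hx => obtain ⟨i, rfl⟩ := hx; exact h_mem_S i
  | zero => exact zero_mem_S
  | add _ _ _ _ hx hy => exact add_mem_S hx hy

theorem mem_closure_range_h_of_facetMatrix_mulVec_nonneg {v : Fin 4 → ℤ}
    (hv : 0 ≤ facetMatrix *ᵥ v) : v ∈ AddSubmonoid.closure (Set.range h) :=
  mem_closure_of_exists_mulVec_le facetMatrix_mulVec_h_pos
    (fun _ => exists_facetMatrix_mulVec_h_le) hv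

theorem mem_S_iff {v : Fin 4 → ℤ} : v ∈ S ↔ 0 ≤ facetMatrix *ᵥ v :=
  ⟨facetMatrix_mulVec_nonneg, fun hv =>
    closure_range_h_subset_S (mem_closure_range_h_of_facetMatrix_mulVec_nonneg hv)⟩

theorem S_eq_closure_range_h : S = AddSubmonoid.closure (Set.range h) :=
  subset_antisymm
    (fun _ hv => mem_closure_range_h_of_facetMatrix_mulVec_nonneg (facetMatrix_mulVec_nonneg hv))
    closure_range_h_subset_S

def Uinv : Matrix (Fin 4) (Fin 4) ℤ :=
  !![0, 2, 1, 2;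
     0, 2, 0, 3;
     0, -1, 0, -1;
     1, 0, 1, 0]

theorem U_mul_Uinv : U * Uinv = 1 := by decide

theorem Uinv_mulVec_mem_S {g : Fin 4 → ℤ} (hg : g ∈ G) : Uinv *ᵥ g ∈ S := by
  rw [mem_S_iff]
  revert g
  simp only [G, Set.mem_insert_iff, Set.mem_singleton_iff, forall_eq_or_imp, forall_eq, Pi.le_def]
  decide

theorem mulVec_h_mem_G (i : Fin 7) : U *ᵥ h i ∈ G := by
  simp only [G, Set.mem_insert_iff, Set.mem_singleton_iff]
  revert i
  decide

theorem image_mulVec_S :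
    (fun v => U *ᵥ v) '' S = AddSubmonoid.closure (Set.range fun i => U *ᵥ h i) := by
  have hmap := AddMonoidHom.map_mclosure (mulVecLin U).toAddMonoidHom (Set.range h)
  rw [← Set.range_comp] at hmap
  rw [S_eq_closure_range_h]
  exact congrArg SetLike.coe hmap

/-- The image of `S = ω ∩ ℤ⁴` under `U` is the subsemigroup `S_A` generated by `𝒢`. -/
theorem stmt_8 :
    (fun v => U.mulVec v) '' S = (AddSubmonoid.closure G : Set (Fin 4 → ℤ)) := by
  rw [image_mulVec_S]
  congr 1
  apply le_antisymm
  · exact AddSubmonoid.closure_mono (Set.range_subset_iff.2 mulVec_h_mem_G)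
  · refine AddSubmonoid.closure_le.2 fun g hg => ?_
    rw [← image_mulVec_S]
    refine ⟨Uinv *ᵥ g, Uinv_mulVec_mem_S hg, ?_⟩
    show U *ᵥ (Uinv *ᵥ g) = g
    rw [mulVec_mulVec, U_mul_Uinv, one_mulVec]
end

section
/- Let S₃ = ω₃ ∩ ℤ⁴. Then the Hilbert basis of S₃ is {f₁, f₂, f₃, f₄, f₅, f₆, f₇, f₈, f₉}, where f₆=(0,2,2,1), f₇=(1,1,1,0), f₈=(1,2,2,0), f₉=(0,1,1,1); that is, every element of S₃ is an ℕ-linear combination of f₁, …, f₉, and no fᵢ (1 ≤ i ≤ 9) can be written as a sum of two nonzero elements of S₃. -/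
/-- The nine lattice points `f₁, …, f₉` (0-indexed as `f 0, …, f 8`). -/
def f : Fin 9 → (Fin 4 → ℤ) :=
  ![![1,0,0,0], ![0,1,0,0], ![1,2,3,0], ![0,0,0,1], ![0,3,3,1],
    ![0,2,2,1], ![1,1,1,0], ![1,2,2,0], ![0,1,1,1]]

/-- The cone `ω₃` generated by `f₁, …, f₅`. -/
def ω₃ : Set (Fin 4 → ℝ) := cone (fun i : Fin 5 => toR (f (Fin.castLE (by norm_num) i)))

/-- The semigroup `S₃ = ω₃ ∩ ℤ⁴`. -/
def S₃ : Set (Fin 4 → ℤ) := {v | toR v ∈ ω₃}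

/-!
`ω₃` lies in the intersection of six half-spaces `⟨w, x⟩ ≥ 0` (its facets), since each of
`f₁, …, f₅` does. Each `fᵢ` is a nonnegative rational combination of `f₁, …, f₅`. Conversely, from
every nonzero lattice point `v` satisfying the six facet inequalities one can subtract a suitable
`fᵢ` and stay inside, so induction on the coordinate sum writes `v` as an `ℕ`-combination of the
`fᵢ`. Irreducibility of each `fᵢ` is linear arithmetic on the facet inequalities of the summands.
-/

open Matrix

lemma dotProduct_nonneg_of_mem_cone {n : ℕ} {v : Fin n → Fin 4 → ℝ} {w x : Fin 4 → ℝ}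
    (hw : ∀ i, 0 ≤ w ⬝ᵥ v i) (hx : x ∈ cone v) : 0 ≤ w ⬝ᵥ x := by
  obtain ⟨lam, hlam, rfl⟩ := hx
  rw [dotProduct_sum]
  exact Finset.sum_nonneg fun i _ => by
    rw [dotProduct_smul, smul_eq_mul]
    exact mul_nonneg (hlam i) (hw i)

lemma toR_dotProduct_toR (w v : Fin 4 → ℤ) : toR w ⬝ᵥ toR v = ((w ⬝ᵥ v : ℤ) : ℝ) :=
  ((Int.castRingHom ℝ).map_dotProduct w v).symm

lemma dotProduct_nonneg_of_mem_S₃ {w v : Fin 4 → ℤ}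
    (hw : ∀ i : Fin 5, 0 ≤ w ⬝ᵥ f (Fin.castLE (by norm_num) i)) (hv : v ∈ S₃) :
    0 ≤ w ⬝ᵥ v := by
  have := dotProduct_nonneg_of_mem_cone (w := toR w) (fun i => ?_) hv
  · rw [toR_dotProduct_toR] at this
    exact_mod_cast this
  · rw [toR_dotProduct_toR]
    exact_mod_cast hw i

def facetNormal : Fin 6 → Fin 4 → ℤ :=
  ![![1,0,0,0], ![0,0,1,0], ![0,0,0,1], ![1,1,-1,0], ![0,3,-2,0], ![3,0,-1,3]]

def facetCone : Set (Fin 4 → ℤ) := {v | ∀ k, 0 ≤ facetNormal k ⬝ᵥ v}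

lemma mem_facetCone_iff {v : Fin 4 → ℤ} : v ∈ facetCone ↔
    0 ≤ v 0 ∧ 0 ≤ v 2 ∧ 0 ≤ v 3 ∧ 0 ≤ v 0 + v 1 - v 2 ∧ 0 ≤ 3 * v 1 - 2 * v 2 ∧
      0 ≤ 3 * v 0 - v 2 + 3 * v 3 := by
  simp [facetCone, Fin.forall_fin_succ, dotProduct, Fin.sum_univ_four, facetNormal]
  omega

lemma S₃_subset_facetCone : S₃ ⊆ facetCone := fun _ hv k =>
  dotProduct_nonneg_of_mem_S₃ (by fin_cases k <;> decide) hv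

noncomputable def coneCoeff : Fin 9 → Fin 5 → ℝ :=
  ![![1,0,0,0,0], ![0,1,0,0,0], ![0,0,1,0,0], ![0,0,0,1,0], ![0,0,0,0,1],
    ![0,0,0,1/3,2/3], ![2/3,1/3,1/3,0,0], ![1/3,2/3,2/3,0,0], ![0,0,0,2/3,1/3]]

lemma f_mem_S₃ (i : Fin 9) : f i ∈ S₃ := by
  refine ⟨coneCoeff i, fun k => ?_, ?_⟩
  · fin_cases i <;> fin_cases k <;> norm_num [coneCoeff]
  · ext j
    simp only [toR, Finset.sum_apply, Pi.smul_apply, smul_eq_mul, Fin.sum_univ_five, Fin.castLE]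
    fin_cases i <;> fin_cases j <;>
      norm_num [coneCoeff, f, cons_val_two, cons_val_three, cons_val_four]

lemma exists_nsmul_sum_eq_of_descent {G ι : Type*} [AddCommGroup G] [Fintype ι]
    {P : G → Prop} (g : ι → G) (μ : G → ℕ)
    (step : ∀ v, P v → v ≠ 0 → ∃ i, P (v - g i) ∧ μ (v - g i) < μ v) {v : G} (hv : P v) :
    ∃ c : ι → ℕ, v = ∑ i, c i • g i := by
  classical
  induction hμ : μ v using Nat.strong_induction_on generalizing v with
  | _ n ih =>
  by_cases h0 : v = 0
  · exact ⟨0, by simp [h0]⟩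
  obtain ⟨i, hi, hlt⟩ := step v hv h0
  obtain ⟨c, hc⟩ := ih _ (hμ ▸ hlt) hi rfl
  refine ⟨c + Pi.single i 1, ?_⟩
  simp [add_smul, Finset.sum_add_distrib, ← hc]

lemma eq_zero_iff_coords {v : Fin 4 → ℤ} : v = 0 ↔ v 0 = 0 ∧ v 1 = 0 ∧ v 2 = 0 ∧ v 3 = 0 := by
  simp [funext_iff, Fin.forall_fin_succ]

/- The generator to subtract is dictated by the residue of `3 v₀ - v₂ + 3 v₃ ≡ -v₂ (mod 3)`,
which also fixes `3 v₁ - 2 v₂ ≡ v₂ (mod 3)`. -/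
lemma exists_sub_f_mem_facetCone {v : Fin 4 → ℤ} (hv : v ∈ facetCone) (h0 : v ≠ 0) :
    ∃ i, v - f i ∈ facetCone := by
  rw [mem_facetCone_iff] at hv
  rw [Ne, eq_zero_iff_coords] at h0
  simp only [mem_facetCone_iff, Pi.sub_apply]
  by_cases hd : 1 ≤ v 3
  · obtain ht | ht | ht | ht : 3 ≤ 3 * v 0 - v 2 + 3 * v 3 ∨ 3 * v 0 - v 2 + 3 * v 3 = 2 ∨
        3 * v 0 - v 2 + 3 * v 3 = 1 ∨ 3 * v 0 - v 2 + 3 * v 3 = 0 := by omega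
    · exact ⟨3, by simp [f]; omega⟩
    · exact ⟨8, by simp [f]; omega⟩
    · exact ⟨5, by simp [f]; omega⟩
    · exact ⟨4, by simp [f]; omega⟩
  · by_cases ha : v 0 = 0
    · exact ⟨1, by simp [f]; omega⟩
    obtain hs | ht | ht | ht | ht : v 0 + v 1 - v 2 = 0 ∨ 3 ≤ 3 * v 0 - v 2 ∨
        3 * v 0 - v 2 = 2 ∨ 3 * v 0 - v 2 = 1 ∨ 3 * v 0 - v 2 = 0 := by omega
    · exact ⟨2, by simp [f]; omega⟩
    · exact ⟨0, by simp [f]; omega⟩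
    · exact ⟨6, by simp [f]; omega⟩
    · exact ⟨7, by simp [f]; omega⟩
    · exact ⟨2, by simp [f]; omega⟩

lemma exists_nsmul_sum_f_of_mem_facetCone {v : Fin 4 → ℤ} (hv : v ∈ facetCone) :
    ∃ c : Fin 9 → ℕ, v = ∑ i, c i • f i := by
  refine exists_nsmul_sum_eq_of_descent f (fun v => (∑ j, v j).toNat) (fun v hv h0 => ?_) hv
  obtain ⟨i, hi⟩ := exists_sub_f_mem_facetCone hv h0
  have hsum_pos : 1 ≤ ∑ j, f i j := by fin_cases i <;> decide
  refine ⟨i, hi, ?_⟩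
  rw [mem_facetCone_iff] at hv hi
  simp only [Pi.sub_apply, Finset.sum_sub_distrib, Fin.sum_univ_four] at hi hsum_pos ⊢
  omega

lemma eq_zero_or_eq_zero_of_f_eq_add (i : Fin 9) {a b : Fin 4 → ℤ} (ha : a ∈ facetCone)
    (hb : b ∈ facetCone) (hab : f i = a + b) : a = 0 ∨ b = 0 := by
  rw [mem_facetCone_iff] at ha hb
  rw [eq_zero_iff_coords, eq_zero_iff_coords]
  simp only [funext_iff, Fin.forall_fin_succ, Pi.add_apply] at hab
  fin_cases i <;> simp [f] at hab <;> omega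

/-- The Hilbert basis of `S₃ = ω₃ ∩ ℤ⁴` is `{f₁, …, f₉}`, where
`f₆=(0,2,2,1)`, `f₇=(1,1,1,0)`, `f₈=(1,2,2,0)`, `f₉=(0,1,1,1)`. -/
theorem stmt_14 :
    (∀ i, f i ∈ S₃) ∧
    (∀ v ∈ S₃, ∃ c : Fin 9 → ℕ, v = ∑ i, c i • f i) ∧
    (∀ i : Fin 9, ¬ ∃ a ∈ S₃, ∃ b ∈ S₃, a ≠ 0 ∧ b ≠ 0 ∧ f i = a + b) := by
  refine ⟨f_mem_S₃, fun v hv => exists_nsmul_sum_f_of_mem_facetCone (S₃_subset_facetCone hv), ?_⟩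
  rintro i ⟨a, ha, b, hb, ha0, hb0, hab⟩
  obtain h | h :=
    eq_zero_or_eq_zero_of_f_eq_add i (S₃_subset_facetCone ha) (S₃_subset_facetCone hb) hab
  exacts [ha0 h, hb0 h]
end
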